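/- (Thermodynamic bound on classical-type cross correlations.) Let G_R, G_S ∈ M_n(ℂ) be Hermitian, let G = G_R ⊗ G_S ⊗ I_M, and let g_max ≥ 0 satisfy ‖G x‖ ≤ g_max ‖x‖ for all x ∈ ℂ^n ⊗ ℂ^n ⊗ ℂ^M. Then the cross correlator R(0,T) = ⟨Ψ_T, G Ψ_T⟩ = ∑_{i,j} √(p_i p_j) Tr[G_R ψ_i ψ_j†] Tr[G_S ∑_m V_m ψ_i ψ_j† V_m†] satisfies Q_G − √(g_max² · Ξ) ≤ R(0,T) ≤ Q_G + √(g_max² · Ξ), where Q_G = Re⟨Ψ̃_0, G Ψ_T⟩ and Ξ = Tr[ρ (V_0† V_0)^{−1}] − 1. -/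

import Mathlib

open Matrix Kronecker Finset

noncomputable section

/-- Tensor product of two vectors. -/
def tvec {α β : Type*} (x : α → ℂ) (y : β → ℂ) : α × β → ℂ :=
  fun q => x q.1 * y q.2

/-- Standard basis vector `f_m` of the environment `ℂ^(M+1)`. -/
def stdv (M : ℕ) (m : Fin (M + 1)) : Fin (M + 1) → ℂ :=
  fun k => if k = m then 1 else 0

variable {n M : ℕ}

/-- The final pure state `Ψ_T = ∑_{i,m} √p_i ψ_i ⊗ (V_m ψ_i) ⊗ f_m` of R+S+E. -/
def PsiT (ψ : Fin n → Fin n → ℂ) (p : Fin n → ℝ)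
    (V : Fin (M + 1) → Matrix (Fin n) (Fin n) ℂ) :
    (Fin n × Fin n) × Fin (M + 1) → ℂ :=
  ∑ i, ∑ m, ((Real.sqrt (p i) : ℂ) • tvec (tvec (ψ i) (V m *ᵥ ψ i)) (stdv M m))

/-- The unnormalized vector `Ψ̃_0 = ∑_i √p_i ψ_i ⊗ ((V_0†)⁻¹ ψ_i) ⊗ f_0`. -/
def PsiTilde0 (ψ : Fin n → Fin n → ℂ) (p : Fin n → ℝ)
    (V : Fin (M + 1) → Matrix (Fin n) (Fin n) ℂ) :
    (Fin n × Fin n) × Fin (M + 1) → ℂ :=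
  ∑ i, ((Real.sqrt (p i) : ℂ) • tvec (tvec (ψ i) ((((V 0)ᴴ)⁻¹) *ᵥ ψ i)) (stdv M 0))

/-- The initial density matrix `ρ = ∑_i p_i ψ_i ψ_i†` of the principal system S. -/
def rho (ψ : Fin n → Fin n → ℂ) (p : Fin n → ℝ) : Matrix (Fin n) (Fin n) ℂ :=
  ∑ i, ((p i : ℂ) • vecMulVec (ψ i) (star (ψ i)))

/-- Expectation value `⟨G⟩ = ⟨Ψ, G Ψ⟩` (its real part, which is all of it for Hermitian `G`). -/
def expval {ι : Type*} [Fintype ι] (G : Matrix ι ι ℂ) (Ψ : ι → ℂ) : ℝ :=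
  (star Ψ ⬝ᵥ (G *ᵥ Ψ)).re

/-- Variance `Var[G] = ⟨Ψ, G² Ψ⟩ − ⟨G⟩²`. -/
def variance {ι : Type*} [Fintype ι] (G : Matrix ι ι ℂ) (Ψ : ι → ℂ) : ℝ :=
  expval (G * G) Ψ - (expval G Ψ) ^ 2

/-- The survival activity `Ξ = Tr[ρ (V_0† V_0)⁻¹] − 1`. -/
def survivalActivity (ψ : Fin n → Fin n → ℂ) (p : Fin n → ℝ)
    (V : Fin (M + 1) → Matrix (Fin n) (Fin n) ℂ) : ℝ :=
  ((rho ψ p * ((V 0)ᴴ * V 0)⁻¹).trace).re - 1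


/-- The no-cost baseline `Q_G = Re⟨Ψ̃_0, G Ψ_T⟩`. -/
def noCostBaseline (ψ : Fin n → Fin n → ℂ) (p : Fin n → ℝ)
    (V : Fin (M + 1) → Matrix (Fin n) (Fin n) ℂ)
    (G : Matrix ((Fin n × Fin n) × Fin (M + 1)) ((Fin n × Fin n) × Fin (M + 1)) ℂ) : ℝ :=
  (star (PsiTilde0 ψ p V) ⬝ᵥ (G *ᵥ PsiT ψ p V)).re

/-!
Ψ_T is a unit vector and ⟨Ψ̃_0, Ψ_T⟩ = 1, so ‖Ψ_T − Ψ̃_0‖² = ‖Ψ̃_0‖² − 1 = Ξ. The difference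
R(0,T) − Q_G is Re⟨Ψ_T − Ψ̃_0, G Ψ_T⟩, which Cauchy–Schwarz bounds by ‖Ψ_T − Ψ̃_0‖ ‖G Ψ_T‖ ≤ g_max √Ξ.
The three inner products are computed by splitting Ψ_T into the branches
∑_i √p_i ψ_i ⊗ V_m ψ_i ⊗ f_m, whose overlaps are ⟨A-branch, B-branch⟩ = Tr[ρ A† B] ⟨f, f'⟩.
-/

section InnerProduct

variable {𝕜 E : Type*} [RCLike 𝕜] [NormedAddCommGroup E] [InnerProductSpace 𝕜 E]

open RCLike

theorem norm_sub_sq_of_re_inner_eq_one {a b : E} (hb : ‖b‖ = 1) (hab : re (inner 𝕜 a b) = 1) :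
    ‖b - a‖ ^ 2 = ‖a‖ ^ 2 - 1 := by
  rw [@norm_sub_sq 𝕜, ← inner_re_symm, hab, hb]
  ring

theorem abs_re_inner_sub_re_inner_le {a b c : E} {g : ℝ} (hb : ‖b‖ = 1)
    (hab : re (inner 𝕜 a b) = 1) (hc : ‖c‖ ≤ g) :
    |re (inner 𝕜 b c) - re (inner 𝕜 a c)| ≤ √(g ^ 2 * (‖a‖ ^ 2 - 1)) := by
  have hg : 0 ≤ g := (norm_nonneg c).trans hc
  rw [← norm_sub_sq_of_re_inner_eq_one hb hab, Real.sqrt_mul (sq_nonneg g), Real.sqrt_sq hg,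
    Real.sqrt_sq (norm_nonneg _), ← map_sub, ← inner_sub_left]
  calc |re (inner 𝕜 (b - a) c)| ≤ ‖inner 𝕜 (b - a) c‖ := abs_re_le_norm _
    _ ≤ ‖b - a‖ * ‖c‖ := norm_inner_le_norm _ _
    _ ≤ ‖b - a‖ * g := by gcongr
    _ = g * ‖b - a‖ := mul_comm _ _

end InnerProduct

theorem star_dotProduct_eq_inner_toLp {𝕜 ι : Type*} [RCLike 𝕜] [Fintype ι] (x y : ι → 𝕜) :
    star x ⬝ᵥ y = inner 𝕜 (WithLp.toLp 2 x) (WithLp.toLp 2 y) := by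
  rw [EuclideanSpace.inner_toLp_toLp, dotProduct_comm]

theorem norm_toLp_eq_sqrt {𝕜 ι : Type*} [RCLike 𝕜] [Fintype ι] (x : ι → 𝕜) :
    ‖WithLp.toLp 2 x‖ = √(∑ i, ‖x i‖ ^ 2) :=
  EuclideanSpace.norm_eq _

section TensorVectors

theorem star_tvec {α β : Type*} (x : α → ℂ) (y : β → ℂ) :
    star (tvec x y) = tvec (star x) (star y) := by
  funext q
  simp [tvec]

theorem tvec_dotProduct_tvec {α β : Type*} [Fintype α] [Fintype β] (x x' : α → ℂ)
    (y y' : β → ℂ) : tvec x y ⬝ᵥ tvec x' y' = (x ⬝ᵥ x') * (y ⬝ᵥ y') := by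
  simp only [dotProduct, tvec, Fintype.sum_prod_type, Finset.sum_mul_sum]
  exact Finset.sum_congr rfl fun _ _ => Finset.sum_congr rfl fun _ _ => by ring

theorem star_tvec_dotProduct_tvec {α β : Type*} [Fintype α] [Fintype β] (x x' : α → ℂ)
    (y y' : β → ℂ) : star (tvec x y) ⬝ᵥ tvec x' y' = (star x ⬝ᵥ x') * (star y ⬝ᵥ y') := by
  rw [star_tvec, tvec_dotProduct_tvec]

theorem star_stdv_dotProduct_stdv (m m' : Fin (M + 1)) :
    star (stdv M m) ⬝ᵥ stdv M m' = if m = m' then 1 else 0 := by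
  by_cases h : m = m'
  · simp [h, stdv, dotProduct]
  · simp [stdv, dotProduct, apply_ite (star : ℂ → ℂ), h, Ne.symm h]

end TensorVectors

section Purification

variable (ψ : Fin n → Fin n → ℂ) (p : Fin n → ℝ)

theorem trace_rho_mul (X : Matrix (Fin n) (Fin n) ℂ) :
    (rho ψ p * X).trace = ∑ i, (p i : ℂ) * (star (ψ i) ⬝ᵥ (X *ᵥ ψ i)) := by
  simp only [rho, Finset.sum_mul, trace_sum, smul_mul_assoc, trace_smul, smul_eq_mul]
  refine Finset.sum_congr rfl fun i _ => congrArg _ ?_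
  simp only [Matrix.trace, Matrix.diag_apply, Matrix.mul_apply, vecMulVec_apply,
    dotProduct, mulVec, Finset.mul_sum]
  rw [Finset.sum_comm]
  exact Finset.sum_congr rfl fun _ _ => Finset.sum_congr rfl fun _ _ => by ring

variable {ψ p}

theorem trace_rho (hortho : ∀ i j, star (ψ i) ⬝ᵥ ψ j = if i = j then (1 : ℂ) else 0)
    (hp1 : ∑ i, p i = 1) : (rho ψ p).trace = 1 := by
  simpa [hortho, ← Complex.ofReal_sum, hp1] using trace_rho_mul ψ p 1

variable (ψ p)

def krausBranch {ε : Type*} (A : Matrix (Fin n) (Fin n) ℂ) (e : ε → ℂ) :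
    (Fin n × Fin n) × ε → ℂ :=
  ∑ i, ((Real.sqrt (p i) : ℂ) • tvec (tvec (ψ i) (A *ᵥ ψ i)) e)

theorem PsiT_eq_sum_krausBranch (V : Fin (M + 1) → Matrix (Fin n) (Fin n) ℂ) :
    PsiT ψ p V = ∑ m, krausBranch ψ p (V m) (stdv M m) := by
  simp only [PsiT, krausBranch]
  exact Finset.sum_comm

theorem PsiTilde0_eq_krausBranch (V : Fin (M + 1) → Matrix (Fin n) (Fin n) ℂ) :
    PsiTilde0 ψ p V = krausBranch ψ p ((V 0)ᴴ)⁻¹ (stdv M 0) := rfl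

variable {ψ p}

theorem star_krausBranch_dotProduct_krausBranch {ε : Type*} [Fintype ε]
    (hortho : ∀ i j, star (ψ i) ⬝ᵥ ψ j = if i = j then (1 : ℂ) else 0) (hp : ∀ i, 0 ≤ p i)
    (A B : Matrix (Fin n) (Fin n) ℂ) (e e' : ε → ℂ) :
    star (krausBranch ψ p A e) ⬝ᵥ krausBranch ψ p B e'
      = (rho ψ p * (Aᴴ * B)).trace * (star e ⬝ᵥ e') := by
  have hAB : ∀ x : Fin n → ℂ, star (A *ᵥ x) ⬝ᵥ (B *ᵥ x) = star x ⬝ᵥ ((Aᴴ * B) *ᵥ x) := by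
    intro x
    rw [star_mulVec, ← dotProduct_mulVec, mulVec_mulVec]
  simp only [krausBranch, star_sum, star_smul, sum_dotProduct, dotProduct_sum, smul_dotProduct,
    dotProduct_smul, star_tvec_dotProduct_tvec, hortho, smul_eq_mul, Complex.star_def,
    Complex.conj_ofReal, trace_rho_mul, Finset.sum_mul, ite_mul, one_mul, zero_mul, mul_ite,
    mul_zero, Finset.sum_ite_eq', Finset.mem_univ, if_true, hAB]
  refine Finset.sum_congr rfl fun i _ => ?_
  rw [← mul_assoc, ← Complex.ofReal_mul, Real.mul_self_sqrt (hp i), mul_assoc]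

end Purification

section States

variable {ψ : Fin n → Fin n → ℂ} {p : Fin n → ℝ} {V : Fin (M + 1) → Matrix (Fin n) (Fin n) ℂ}

theorem star_PsiT_dotProduct_PsiT
    (hortho : ∀ i j, star (ψ i) ⬝ᵥ ψ j = if i = j then (1 : ℂ) else 0) (hp : ∀ i, 0 ≤ p i)
    (hp1 : ∑ i, p i = 1) (hKraus : ∑ m, (V m)ᴴ * V m = 1) :
    star (PsiT ψ p V) ⬝ᵥ PsiT ψ p V = 1 := by
  simp only [PsiT_eq_sum_krausBranch, star_sum, sum_dotProduct, dotProduct_sum,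
    star_krausBranch_dotProduct_krausBranch hortho hp, star_stdv_dotProduct_stdv, mul_ite,
    mul_one, mul_zero, Finset.sum_ite_eq', Finset.mem_univ, if_true]
  rw [← trace_sum, ← Matrix.mul_sum, hKraus, mul_one, trace_rho hortho hp1]

theorem star_PsiTilde0_dotProduct_PsiT
    (hortho : ∀ i j, star (ψ i) ⬝ᵥ ψ j = if i = j then (1 : ℂ) else 0) (hp : ∀ i, 0 ≤ p i)
    (hp1 : ∑ i, p i = 1) (hV0 : IsUnit (V 0)) :
    star (PsiTilde0 ψ p V) ⬝ᵥ PsiT ψ p V = 1 := by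
  simp only [PsiTilde0_eq_krausBranch, PsiT_eq_sum_krausBranch, dotProduct_sum,
    star_krausBranch_dotProduct_krausBranch hortho hp, star_stdv_dotProduct_stdv, mul_ite,
    mul_one, mul_zero, Finset.sum_ite_eq, Finset.mem_univ, if_true]
  rw [← conjTranspose_nonsing_inv, conjTranspose_conjTranspose,
    nonsing_inv_mul _ ((isUnit_iff_isUnit_det _).mp hV0), mul_one, trace_rho hortho hp1]

theorem star_PsiTilde0_dotProduct_PsiTilde0
    (hortho : ∀ i j, star (ψ i) ⬝ᵥ ψ j = if i = j then (1 : ℂ) else 0) (hp : ∀ i, 0 ≤ p i) :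
    star (PsiTilde0 ψ p V) ⬝ᵥ PsiTilde0 ψ p V = (rho ψ p * ((V 0)ᴴ * V 0)⁻¹).trace := by
  rw [PsiTilde0_eq_krausBranch, star_krausBranch_dotProduct_krausBranch hortho hp,
    star_stdv_dotProduct_stdv, if_pos rfl, mul_one, ← conjTranspose_nonsing_inv,
    conjTranspose_conjTranspose, Matrix.mul_inv_rev, conjTranspose_nonsing_inv]

end States

theorem cross_correlation_bound_general
    (ψ : Fin n → Fin n → ℂ)
    (hortho : ∀ i j, star (ψ i) ⬝ᵥ ψ j = if i = j then (1 : ℂ) else 0)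
    (p : Fin n → ℝ) (hp : ∀ i, 0 ≤ p i) (hp1 : ∑ i, p i = 1)
    (V : Fin (M + 1) → Matrix (Fin n) (Fin n) ℂ)
    (hKraus : ∑ m, (V m)ᴴ * V m = 1)
    (hV0 : IsUnit (V 0))
    (GR GS : Matrix (Fin n) (Fin n) ℂ)
    (gmax : ℝ)
    (hgmax : ∀ x : (Fin n × Fin n) × Fin (M + 1) → ℂ,
      Real.sqrt (∑ k, ‖
          ((((GR ⊗ₖ GS) ⊗ₖ (1 : Matrix (Fin (M + 1)) (Fin (M + 1)) ℂ)) *ᵥ x) k)‖ ^ 2)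
        ≤ gmax * Real.sqrt (∑ k, ‖x k‖ ^ 2)) :
    noCostBaseline ψ p V ((GR ⊗ₖ GS) ⊗ₖ (1 : Matrix (Fin (M + 1)) (Fin (M + 1)) ℂ)) -
          Real.sqrt (gmax ^ 2 * survivalActivity ψ p V)
        ≤ expval ((GR ⊗ₖ GS) ⊗ₖ (1 : Matrix (Fin (M + 1)) (Fin (M + 1)) ℂ)) (PsiT ψ p V) ∧
      expval ((GR ⊗ₖ GS) ⊗ₖ (1 : Matrix (Fin (M + 1)) (Fin (M + 1)) ℂ)) (PsiT ψ p V)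
        ≤ noCostBaseline ψ p V ((GR ⊗ₖ GS) ⊗ₖ (1 : Matrix (Fin (M + 1)) (Fin (M + 1)) ℂ)) +
          Real.sqrt (gmax ^ 2 * survivalActivity ψ p V) := by
  set G := (GR ⊗ₖ GS) ⊗ₖ (1 : Matrix (Fin (M + 1)) (Fin (M + 1)) ℂ)
  set b := WithLp.toLp 2 (PsiT ψ p V)
  set a := WithLp.toLp 2 (PsiTilde0 ψ p V)
  set c := WithLp.toLp 2 (G *ᵥ PsiT ψ p V)
  have hb : ‖b‖ = 1 := by
    rw [norm_eq_sqrt_re_inner (𝕜 := ℂ), ← star_dotProduct_eq_inner_toLp,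
      star_PsiT_dotProduct_PsiT hortho hp hp1 hKraus]
    simp
  have hab : RCLike.re (inner ℂ a b) = 1 := by
    rw [← star_dotProduct_eq_inner_toLp, star_PsiTilde0_dotProduct_PsiT hortho hp hp1 hV0]
    simp
  have hc : ‖c‖ ≤ gmax := by
    have h := hgmax (PsiT ψ p V)
    rwa [← norm_toLp_eq_sqrt, ← norm_toLp_eq_sqrt, hb, mul_one] at h
  have hXi : survivalActivity ψ p V = ‖a‖ ^ 2 - 1 := by
    rw [survivalActivity, ← star_PsiTilde0_dotProduct_PsiTilde0 hortho hp,
      star_dotProduct_eq_inner_toLp]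
    exact congrArg (· - 1) (norm_sq_eq_re_inner (𝕜 := ℂ) a).symm
  have hR : expval G (PsiT ψ p V) = RCLike.re (inner ℂ b c) :=
    congrArg Complex.re (star_dotProduct_eq_inner_toLp _ _)
  have hQ : noCostBaseline ψ p V G = RCLike.re (inner ℂ a c) :=
    congrArg Complex.re (star_dotProduct_eq_inner_toLp _ _)
  obtain ⟨hlower, hupper⟩ := abs_sub_le_iff.mp (abs_re_inner_sub_re_inner_le hb hab hc)
  rw [hR, hQ, hXi]
  constructor <;> linarith

/-- **Thermodynamic bound on classical-type cross correlations.** The cross correlator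
`R(0,T) = ⟨Ψ_T, (G_R ⊗ G_S ⊗ I) Ψ_T⟩` is bounded as
`Q_G − √(g_max² Ξ) ≤ R(0,T) ≤ Q_G + √(g_max² Ξ)`. -/
theorem cross_correlation_bound
    (ψ : Fin n → Fin n → ℂ)
    (hortho : ∀ i j, star (ψ i) ⬝ᵥ ψ j = if i = j then (1 : ℂ) else 0)
    (p : Fin n → ℝ) (hp : ∀ i, 0 ≤ p i) (hp1 : ∑ i, p i = 1)
    (V : Fin (M + 1) → Matrix (Fin n) (Fin n) ℂ)
    (hKraus : ∑ m, (V m)ᴴ * V m = 1)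
    (hV0 : IsUnit (V 0))
    (GR GS : Matrix (Fin n) (Fin n) ℂ) (hGR : GR.IsHermitian) (hGS : GS.IsHermitian)
    (gmax : ℝ) (hgmax0 : 0 ≤ gmax)
    (hgmax : ∀ x : (Fin n × Fin n) × Fin (M + 1) → ℂ,
      Real.sqrt (∑ k, ‖
          ((((GR ⊗ₖ GS) ⊗ₖ (1 : Matrix (Fin (M + 1)) (Fin (M + 1)) ℂ)) *ᵥ x) k)‖ ^ 2)
        ≤ gmax * Real.sqrt (∑ k, ‖x k‖ ^ 2)) :
    noCostBaseline ψ p V ((GR ⊗ₖ GS) ⊗ₖ (1 : Matrix (Fin (M + 1)) (Fin (M + 1)) ℂ)) -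
          Real.sqrt (gmax ^ 2 * survivalActivity ψ p V)
        ≤ expval ((GR ⊗ₖ GS) ⊗ₖ (1 : Matrix (Fin (M + 1)) (Fin (M + 1)) ℂ)) (PsiT ψ p V) ∧
      expval ((GR ⊗ₖ GS) ⊗ₖ (1 : Matrix (Fin (M + 1)) (Fin (M + 1)) ℂ)) (PsiT ψ p V)
        ≤ noCostBaseline ψ p V ((GR ⊗ₖ GS) ⊗ₖ (1 : Matrix (Fin (M + 1)) (Fin (M + 1)) ℂ)) +
          Real.sqrt (gmax ^ 2 * survivalActivity ψ p V) :=
  cross_correlation_bound_general ψ hortho p hp hp1 V hKraus hV0 GR GS gmax hgmax
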